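/- Jacobian approximation error of linearized localization (Lemma 5.9 of the paper): let G : ℝ^{d_u} → ℝ^{d_y} be differentiable at ū, let C ∈ ℝ^{d_u × d_u} be symmetric positive semidefinite, let Ψ ∈ ℝ^{d_u × d_u} be symmetric with nonnegative entries, set C̃ = C ∘ Ψ, and let H ∈ ℝ^{d_y × d_u}. Then the linearized localization C̃^{up} = C̃ Hᵀ satisfies ‖∇G(ū) C̃^{up} − ∇G(ū) C̃ ∇G(ū)ᵀ‖ ≤ ‖H − ∇G(ū)‖ · ‖∇G(ū)‖ · ‖C‖_max · ψ₀, where ψ₀ = max_i Σ_{j=1}^{d_u} Ψ_{i,j}. -/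

import Mathlib

open Matrix

/-- The `l₂` operator norm of a real matrix. -/
noncomputable def opNorm {m n : ℕ} (A : Matrix (Fin m) (Fin n) ℝ) : ℝ :=
  ‖LinearMap.toContinuousLinearMap (Matrix.toEuclideanLin A)‖

/-- The maximal diagonal entry of a matrix; for a positive semidefinite matrix this equals
`‖C‖_max = max_{i,j}|C_{i,j}|`. -/
noncomputable def maxDiag {n : ℕ} (A : Matrix (Fin n) (Fin n) ℝ) : ℝ := ⨆ i, A i i

/-- The Jacobian matrix of `G` at `u`: `(jacobian G u) j m = ∂_{u_m} G_j(u)`. -/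
noncomputable def jacobian {du dy : ℕ} (G : (Fin du → ℝ) → Fin dy → ℝ) (u : Fin du → ℝ) :
    Matrix (Fin dy) (Fin du) ℝ :=
  Matrix.of fun j m => fderiv ℝ (fun v => G v j) u (Pi.single m 1)

/-! The error factors as `∇G C̃ (H - ∇G)ᵀ`, so by submultiplicativity of the operator norm it
suffices to show `‖C̃‖ ≤ ‖C‖_max ψ₀`. The matrix `C̃` is symmetric, so its `l₂` norm equals its
spectral radius, which is at most its `l∞` operator norm, the maximal absolute row sum. Testing
`C` against `eᵢ ± eⱼ` gives `2 |C i j| ≤ C i i + C j j ≤ 2 ‖C‖_max`, hence every absolute row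
sum of `C̃ = C ∘ Ψ` is at most `‖C‖_max ψ₀`. -/

open scoped NNReal ENNReal

namespace Matrix

variable {n : Type*} [Fintype n]

lemma PosSemidef.two_mul_abs_apply_le {C : Matrix n n ℝ} (hC : C.PosSemidef) (i j : n) :
    2 * |C i j| ≤ C i i + C j j := by
  classical
  have hsymm : C j i = C i j := hC.isHermitian.apply i j
  have hquad (s : ℝ) : 0 ≤ C i i + s * C i j + s * C j i + s ^ 2 * C j j := by
    have := hC.dotProduct_mulVec_nonneg (Pi.single i 1 + Pi.single j s)
    simp only [star_trivial, mulVec_add, dotProduct_add, add_dotProduct, single_dotProduct,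
      mulVec_single, one_mul, Pi.smul_apply, op_smul_eq_mul, col_apply] at this
    linarith
  rw [hsymm] at hquad
  have := hquad 1
  have := hquad (-1)
  rcases abs_cases (C i j) with ⟨h, _⟩ | ⟨h, _⟩ <;> rw [h] <;> nlinarith

variable {𝕜 : Type*} [RCLike 𝕜] [DecidableEq n]

/-- The spectral radius does not depend on the norm, so it may be bounded in the algebra of
matrices normed by the `l∞` operator norm (which is not an instance). -/
lemma spectralRadius_le_linfty_opNNNorm [Nonempty n] (A : Matrix n n 𝕜) :
    spectralRadius 𝕜 A ≤ ((Finset.univ.sup fun i => ∑ j, ‖A i j‖₊ : ℝ≥0) : ℝ≥0∞) := by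
  let := Matrix.linftyOpNormedRing (n := n) (α := 𝕜)
  let := Matrix.linftyOpNormedAlgebra (n := n) (R := 𝕜) (α := 𝕜)
  rw [← linfty_opNNNorm_def]
  exact @spectrum.spectralRadius_le_nnnorm 𝕜 _ _ _ _ (FiniteDimensional.complete 𝕜 _) _ A

open scoped Matrix.Norms.L2Operator

lemma IsHermitian.l2_opNNNorm_eq_spectralRadius {A : Matrix n n 𝕜} (hA : A.IsHermitian) :
    (‖A‖₊ : ℝ≥0∞) = spectralRadius 𝕜 A := by
  rw [cstar_nnnorm_def,
    ← ContinuousLinearMap.spectralRadius_eq_nnnorm _ (hA.isSelfAdjoint.map toEuclideanCLM),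
    spectralRadius, spectralRadius, AlgEquiv.spectrum_eq]

lemma IsHermitian.l2_opNorm_le_of_sum_norm_le {A : Matrix n n 𝕜} (hA : A.IsHermitian)
    {r : ℝ} (hr : 0 ≤ r) (hrow : ∀ i, ∑ j, ‖A i j‖ ≤ r) : ‖A‖ ≤ r := by
  rcases isEmpty_or_nonempty n with hn | hn
  · simpa [Subsingleton.elim A 0] using hr
  have hspec := hA.l2_opNNNorm_eq_spectralRadius.trans_le (spectralRadius_le_linfty_opNNNorm A)
  have hsup : (Finset.univ.sup fun i => ∑ j, ‖A i j‖₊) ≤ ⟨r, hr⟩ :=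
    Finset.sup_le fun i _ => NNReal.coe_le_coe.mp (by rw [NNReal.coe_sum]; exact hrow i)
  exact_mod_cast (ENNReal.coe_le_coe.mp hspec).trans hsup

lemma l2_opNorm_hadamard_le {C Ψ : Matrix n n ℝ} (hC : C.PosSemidef) (hΨ : Ψ.IsSymm)
    (hΨ_nonneg : ∀ i j, 0 ≤ Ψ i j) {c ψ : ℝ} (hc : ∀ i, C i i ≤ c) (hψ : ∀ i, ∑ j, Ψ i j ≤ ψ)
    (hcψ : 0 ≤ c * ψ) : ‖C ⊙ Ψ‖ ≤ c * ψ := by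
  have hherm : (C ⊙ Ψ).IsHermitian := hC.isHermitian.hadamard (isHermitian_iff_isSymm.mpr hΨ)
  refine hherm.l2_opNorm_le_of_sum_norm_le hcψ fun i => ?_
  have hentry (j : n) : ‖(C ⊙ Ψ) i j‖ ≤ c * Ψ i j := by
    rw [hadamard_apply, Real.norm_eq_abs, abs_mul, abs_of_nonneg (hΨ_nonneg i j)]
    have := hC.two_mul_abs_apply_le i j
    exact mul_le_mul_of_nonneg_right (by linarith [hc i, hc j]) (hΨ_nonneg i j)
  have hc₀ : 0 ≤ c := hC.diag_nonneg.trans (hc i)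
  calc ∑ j, ‖(C ⊙ Ψ) i j‖ ≤ ∑ j, c * Ψ i j := Finset.sum_le_sum fun j _ => hentry j
    _ = c * ∑ j, Ψ i j := (Finset.mul_sum _ _ _).symm
    _ ≤ c * ψ := mul_le_mul_of_nonneg_left (hψ i) hc₀

end Matrix

open scoped Matrix.Norms.L2Operator

lemma opNorm_eq_l2_opNorm {m n : ℕ} (A : Matrix (Fin m) (Fin n) ℝ) : opNorm A = ‖A‖ := rfl

lemma le_maxDiag {n : ℕ} (A : Matrix (Fin n) (Fin n) ℝ) (i : Fin n) : A i i ≤ maxDiag A :=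
  le_ciSup (f := fun k => A k k) (Set.finite_range _).bddAbove i

lemma maxDiag_nonneg {n : ℕ} {C : Matrix (Fin n) (Fin n) ℝ} (hC : C.PosSemidef) :
    0 ≤ maxDiag C :=
  Real.iSup_nonneg fun _ => hC.diag_nonneg

theorem jacobian_error_linearized_localization_general {du dy : ℕ}
    (G : (Fin du → ℝ) → Fin dy → ℝ) (ub : Fin du → ℝ)
    (C Ψ : Matrix (Fin du) (Fin du) ℝ)
    (hC : C.PosSemidef) (hΨsymm : Ψ.IsSymm) (hΨnn : ∀ i j, 0 ≤ Ψ i j)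
    (H : Matrix (Fin dy) (Fin du) ℝ)
    (ψ₀ : ℝ) (hψ₀ : ψ₀ = ⨆ i : Fin du, ∑ j, Ψ i j) :
    opNorm (jacobian G ub * (C.hadamard Ψ * Hᵀ)
        - jacobian G ub * C.hadamard Ψ * (jacobian G ub)ᵀ)
      ≤ opNorm (H - jacobian G ub) * opNorm (jacobian G ub) * maxDiag C * ψ₀ := by
  set J := jacobian G ub
  have hfactor : J * (C ⊙ Ψ * Hᵀ) - J * (C ⊙ Ψ) * Jᵀ = J * (C ⊙ Ψ) * (H - J)ᵀ := by
    rw [transpose_sub, Matrix.mul_sub, Matrix.mul_assoc, Matrix.mul_assoc]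
  have hψ : ∀ i, ∑ j, Ψ i j ≤ ψ₀ :=
    hψ₀ ▸ fun i => le_ciSup (f := fun k => ∑ j, Ψ k j) (Set.finite_range _).bddAbove i
  have hψ₀_nonneg : 0 ≤ ψ₀ :=
    hψ₀ ▸ Real.iSup_nonneg fun i => Finset.sum_nonneg fun j _ => hΨnn i j
  have hCΨ : ‖C ⊙ Ψ‖ ≤ maxDiag C * ψ₀ :=
    l2_opNorm_hadamard_le hC hΨsymm hΨnn (le_maxDiag C) hψ
      (mul_nonneg (maxDiag_nonneg hC) hψ₀_nonneg)
  simp only [opNorm_eq_l2_opNorm, hfactor]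
  calc ‖J * (C ⊙ Ψ) * (H - J)ᵀ‖ ≤ ‖J‖ * ‖C ⊙ Ψ‖ * ‖H - J‖ := by
        grw [l2_opNorm_mul, l2_opNorm_mul, ← conjTranspose_eq_transpose_of_trivial,
          l2_opNorm_conjTranspose]
    _ ≤ ‖J‖ * (maxDiag C * ψ₀) * ‖H - J‖ := by gcongr
    _ = ‖H - J‖ * ‖J‖ * maxDiag C * ψ₀ := by ring

/-- **Jacobian approximation error of the linearized localization scheme**
(Lemma 5.9 of the paper).  With `C̃ = C ∘ Ψ` and `C̃^{up} = C̃ Hᵀ`,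
`‖∇G C̃^{up} - ∇G C̃ ∇Gᵀ‖ ≤ ‖H - ∇G‖ ‖∇G‖ ‖C‖_max ψ₀`, where
`ψ₀ = max_i Σ_j Ψ_{i,j}`. -/
theorem jacobian_error_linearized_localization {du dy : ℕ}
    (G : (Fin du → ℝ) → Fin dy → ℝ) (ub : Fin du → ℝ)
    (hdiff : DifferentiableAt ℝ G ub)
    (C Ψ : Matrix (Fin du) (Fin du) ℝ)
    (hC : C.PosSemidef) (hΨsymm : Ψ.IsSymm) (hΨnn : ∀ i j, 0 ≤ Ψ i j)
    (H : Matrix (Fin dy) (Fin du) ℝ)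
    (ψ₀ : ℝ) (hψ₀ : ψ₀ = ⨆ i : Fin du, ∑ j, Ψ i j) :
    opNorm (jacobian G ub * (C.hadamard Ψ * Hᵀ)
        - jacobian G ub * C.hadamard Ψ * (jacobian G ub)ᵀ)
      ≤ opNorm (H - jacobian G ub) * opNorm (jacobian G ub) * maxDiag C * ψ₀ :=
  jacobian_error_linearized_localization_general G ub C Ψ hC hΨsymm hΨnn H ψ₀ hψ₀
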